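/- arXiv:0707.2585 — 7 statements merged into one kernel-verified Lean document; each statement's English description precedes it below -/
import Mathlib

section
/- For all integers 0 ≤ k ≤ n, the poset P_n^k is a connected category: it is nonempty, and any two elements x, y ∈ P_n^k can be joined by a finite zig-zag x = z_0, z_1, …, z_r = y in which consecutive elements z_i, z_{i+1} are comparable in the partial order of P_n^k. -/
/-- An element of the poset `P_n^k`: a `k`-fold interval decomposition of a nonempty
subset of `α` (here `α = Fin (n+1)`, i.e. `{0,1,…,n}`), encoded by its family of parts
`P 0, …, P k` (possibly empty Finsets).  The underlying set is the union of the parts;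
it is required to be nonempty, and whenever `i < i'` every element of `P i` is smaller
than every element of `P i'`.  The order is `P ≤ Q` iff `P j ⊆ Q j` for all `j`. -/
abbrev IntervalDecomp (α : Type) [LinearOrder α] (k : ℕ) : Type :=
  {P : Fin (k + 1) → Finset α //
    (∃ j : Fin (k + 1), (P j).Nonempty) ∧
      ∀ i i' : Fin (k + 1), i < i' → ∀ x ∈ P i, ∀ y ∈ P i', x < y}

/-- The poset `P_n^k` of pairs `(S, {S_j})` with `S` a nonempty subset of `{0,…,n}`
and `{S_j}` a `k`-fold interval decomposition of `S`. -/
abbrev PnK (n k : ℕ) : Type := IntervalDecomp (Fin (n + 1)) k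

/-!
Every element `x` lies above a one-point decomposition `single j a` with `a ∈ x_j`, so it
suffices to join one-point decompositions. Two of them in the same part `j` lie below the
decomposition whose only part is `x_j = {a, b}`; and if `i < j` and `a₀ < b₀`, then `single i a₀`
and `single j b₀` lie below the decomposition with `x_i = {a₀}`, `x_j = {b₀}`. Hence
`single i a ~ single i a₀ ~ single j b₀ ~ single j b`. For `k = 0` there is only one part;
otherwise `n ≥ k ≥ 1` gives `0 < 1` in `{0, …, n}`.
-/

open Relation

theorem Relation.eqvGen_of_le_of_le {β : Type*} [LE β] {x y z : β} (hx : x ≤ z) (hy : y ≤ z) :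
    EqvGen (· ≤ ·) x y :=
  .trans _ _ _ (.rel _ _ hx) (.symm _ _ (.rel _ _ hy))

namespace IntervalDecomp

variable {α : Type} [LinearOrder α] {k : ℕ}

def ofPart (j : Fin (k + 1)) (s : Finset α) (hs : s.Nonempty) : IntervalDecomp α k :=
  ⟨fun i => if i = j then s else ∅, ⟨j, by simpa using hs⟩, by
    intro i i' hii' x hx y hy
    simp only at hx hy
    split_ifs at hx hy with hi hi'
    · exact absurd hii' (by simp [hi, hi'])
    all_goals simp_all⟩

def single (j : Fin (k + 1)) (a : α) : IntervalDecomp α k :=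
  ofPart j {a} (Finset.singleton_nonempty a)

def ofPair {i j : Fin (k + 1)} {a b : α} (hij : i < j) (hab : a < b) : IntervalDecomp α k :=
  ⟨fun l => if l = i then {a} else if l = j then {b} else ∅, ⟨i, by simp⟩, by
    intro l l' hll' x hx y hy
    simp only at hx hy
    split_ifs at hx hy with h₁ h₂ h₃ <;> simp_all [lt_asymm hij]⟩

@[simp]
theorem ofPart_apply_self (j : Fin (k + 1)) (s : Finset α) (hs : s.Nonempty) :
    (ofPart j s hs).1 j = s :=
  if_pos rfl

@[simp]
theorem ofPair_apply_left {i j : Fin (k + 1)} {a b : α} (hij : i < j) (hab : a < b) :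
    (ofPair hij hab).1 i = {a} :=
  if_pos rfl

@[simp]
theorem ofPair_apply_right {i j : Fin (k + 1)} {a b : α} (hij : i < j) (hab : a < b) :
    (ofPair hij hab).1 j = {b} := by
  simp [ofPair, hij.ne']

theorem single_le {x : IntervalDecomp α k} {j : Fin (k + 1)} {a : α} (h : a ∈ x.1 j) :
    single j a ≤ x := by
  intro i
  by_cases hi : i = j
  · subst hi
    simpa [single] using h
  · simp [single, ofPart, hi]

theorem eqvGen_single_single_of_eq (j : Fin (k + 1)) (a b : α) :
    EqvGen (· ≤ ·) (single j a) (single j b) :=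
  eqvGen_of_le_of_le (z := ofPart j {a, b} (Finset.insert_nonempty a {b}))
    (single_le (by simp)) (single_le (by simp))

theorem eqvGen_single_single_of_lt {i j : Fin (k + 1)} {a b : α} (hij : i < j) (hab : a < b) :
    EqvGen (· ≤ ·) (single i a) (single j b) :=
  eqvGen_of_le_of_le (z := ofPair hij hab) (single_le (by simp)) (single_le (by simp))

theorem eqvGen_single_single_of_nontrivial [Nontrivial α] (i j : Fin (k + 1)) (a b : α) :
    EqvGen (· ≤ ·) (single i a) (single j b) := by
  obtain ⟨a₀, b₀, hab₀⟩ := exists_pair_lt α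
  rcases lt_trichotomy i j with hij | rfl | hji
  · exact .trans _ _ _ (eqvGen_single_single_of_eq i a a₀)
      (.trans _ _ _ (eqvGen_single_single_of_lt hij hab₀) (eqvGen_single_single_of_eq j b₀ b))
  · exact eqvGen_single_single_of_eq i a b
  · exact .trans _ _ _ (eqvGen_single_single_of_eq i a b₀)
      (.trans _ _ _ (.symm _ _ (eqvGen_single_single_of_lt hji hab₀))
        (eqvGen_single_single_of_eq j a₀ b))

theorem eqvGen_le (h : k = 0 ∨ Nontrivial α) (x y : IntervalDecomp α k) :
    EqvGen (· ≤ ·) x y := by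
  obtain ⟨⟨i, a, hax⟩, -⟩ := x.2
  obtain ⟨⟨j, b, hby⟩, -⟩ := y.2
  have hsingles : EqvGen (· ≤ ·) (single i a) (single j b) := by
    rcases h with rfl | _
    · exact Subsingleton.elim (α := Fin 1) i j ▸ eqvGen_single_single_of_eq i a b
    · exact eqvGen_single_single_of_nontrivial i j a b
  exact .trans _ _ _ (.symm _ _ (.rel _ _ (single_le hax)))
    (.trans _ _ _ hsingles (.rel _ _ (single_le hby)))

end IntervalDecomp

/-- For `k ≤ n`, the poset `P_n^k` is a connected category: it is nonempty, and any two
elements can be joined by a finite zig-zag in which consecutive elements are comparable. -/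
theorem PnK_connected (n k : ℕ) (hkn : k ≤ n) :
    Nonempty (PnK n k) ∧
      ∀ x y : PnK n k,
        Relation.ReflTransGen (fun a b : PnK n k => a ≤ b ∨ b ≤ a) x y := by
  refine ⟨⟨IntervalDecomp.single 0 0⟩, fun x y => ?_⟩
  change ReflTransGen (SymmGen (· ≤ ·)) x y
  rw [EqvGen.reflTransGen_symmGen]
  refine IntervalDecomp.eqvGen_le ?_ x y
  rcases Nat.eq_zero_or_pos k with hk | hk
  · exact Or.inl hk
  · exact Or.inr (Fin.nontrivial_iff_two_le.2 (by omega))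
end

section
/- For every integer n ≥ 0, the functor π_n : D_n → Δ^(n) is an initial functor; that is, for every object [k] of Δ^(n) (0 ≤ k ≤ n), the comma category π_n ↓ [k] of costructured arrows from π_n to [k] is nonempty and connected. -/
open CategoryTheory

/-- `D_n`: the poset of nonempty subsets of `{0,1,…,n}`, ordered by inclusion. -/
abbrev DSet (n : ℕ) : Type := {S : Finset (Fin (n + 1)) // S.Nonempty}

namespace DSet

lemma card_pos {n : ℕ} (S : DSet n) : 0 < S.1.card := Finset.card_pos.mpr S.2

lemma card_sub_le {n : ℕ} (S : DSet n) : S.1.card - 1 ≤ n := by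
  have h := Finset.card_le_univ S.1
  simp only [Finset.card_univ, Fintype.card_fin] at h
  omega

/-- The unique order isomorphism `ξ_S : [|S|-1] ≃o S`. -/
noncomputable def xi {n : ℕ} (S : DSet n) :
    Fin (S.1.card - 1 + 1) ≃o {x : Fin (n + 1) // x ∈ S.1} :=
  (Fin.castOrderIso (Nat.succ_pred_eq_of_pos (card_pos S))).trans (S.1.orderIsoOfFin rfl)

end DSet

/-- The object part of `π_n : D_n → Δ^{(n)}`, sending `S` to `[|S|-1]`. -/
def pinObj {n : ℕ} (S : DSet n) : SimplexCategory.Truncated n :=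
  ⟨SimplexCategory.mk (S.1.card - 1), by
    simpa [SimplexCategory.len_mk] using DSet.card_sub_le S⟩

/-- The map `π_n(S ⊆ T) : [|S|-1] → [|T|-1]` determined by `π_n(S⊆T) ∘ ξ_S = ξ_T ∘ (S ↪ T)`. -/
noncomputable def pinFun {n : ℕ} {S T : DSet n} (h : S ≤ T) :
    Fin (S.1.card - 1 + 1) → Fin (T.1.card - 1 + 1) :=
  fun i => (DSet.xi T).symm ⟨(DSet.xi S i : Fin (n + 1)), h (DSet.xi S i).2⟩

lemma pinFun_coe {n : ℕ} {S T : DSet n} (h : S ≤ T) (i : Fin (S.1.card - 1 + 1)) :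
    ((DSet.xi T) (pinFun h i) : Fin (n + 1)) = ((DSet.xi S) i : Fin (n + 1)) := by
  unfold pinFun
  rw [OrderIso.apply_symm_apply]

lemma pinFun_mono {n : ℕ} {S T : DSet n} (h : S ≤ T) : Monotone (pinFun h) := by
  intro i j hij
  apply (DSet.xi T).symm.monotone
  exact Subtype.mk_le_mk.mpr (Subtype.coe_le_coe.mpr ((DSet.xi S).monotone hij))

/-- The functor `π_n : D_n ⥤ Δ^{(n)}`. -/
noncomputable def pin (n : ℕ) : DSet n ⥤ SimplexCategory.Truncated n where
  obj := pinObj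
  map {S T} f := ObjectProperty.homMk (SimplexCategory.Hom.mk ⟨pinFun (leOfHom f), pinFun_mono (leOfHom f)⟩)
  map_id S := by
    apply ObjectProperty.hom_ext
    apply SimplexCategory.Hom.ext
    apply OrderHom.ext
    funext i
    have h1 : pinFun (leOfHom (𝟙 S)) i = i := by
      apply (DSet.xi S).injective
      apply Subtype.coe_injective
      simp only [pinFun_coe]
      exact pinFun_coe _ i
    exact h1
  map_comp {S T U} f g := by
    apply ObjectProperty.hom_ext
    apply SimplexCategory.Hom.ext
    apply OrderHom.ext
    funext i
    have h1 : pinFun (leOfHom (f ≫ g)) i = pinFun (leOfHom g) (pinFun (leOfHom f) i) := by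
      apply (DSet.xi U).injective
      apply Subtype.coe_injective
      simp only [pinFun_coe]
      exact (pinFun_coe _ i).trans (pinFun_coe _ i).symm
    exact h1

/-!
Every object `(S, f)` of `π_n ↓ [k]` receives a map from a vertex `({a}, const j)`, namely for
any `a ∈ S` with `j = f(a)`. Two vertices `({a}, j)` and `({b}, j')` with `a < b` and `j ≤ j'`
both map to `({a, b}, a ↦ j, b ↦ j')`, and chaining such spans connects every vertex to
`({n}, k)`.
-/

noncomputable section

namespace DSet

variable {n : ℕ}

def single (a : Fin (n + 1)) : DSet n := ⟨{a}, Finset.singleton_nonempty a⟩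

def pair (a b : Fin (n + 1)) : DSet n := ⟨{a, b}, Finset.insert_nonempty a {b}⟩

lemma xi_single_apply (a : Fin (n + 1)) (i : Fin ((single a).1.card - 1 + 1)) :
    (xi (single a) i : Fin (n + 1)) = a :=
  Finset.mem_singleton.mp (xi (single a) i).2

end DSet

@[simps]
def stepOrderHom {α β : Type*} [Preorder α] [Preorder β] [DecidableLE α] (a : α) {j j' : β}
    (hj : j ≤ j') : α →o β where
  toFun x := if x ≤ a then j else j'
  monotone' x y hxy := by
    dsimp only
    split_ifs with hx hy hy
    · exact le_rfl
    · exact hj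
    · exact absurd (hxy.trans hy) hx
    · exact le_rfl

namespace pin

open SimplexCategory

variable {n : ℕ} (d : Truncated n)

def vertex (a : Fin (n + 1)) (j : Fin (d.obj.len + 1)) : CostructuredArrow (pin n) d :=
  CostructuredArrow.mk (Y := DSet.single a)
    (ObjectProperty.homMk (const _ d.obj j) : (pin n).obj (DSet.single a) ⟶ d)

def valueAt (Y : CostructuredArrow (pin n) d) (a : Fin (n + 1)) (ha : a ∈ Y.left.1) :
    Fin (d.obj.len + 1) :=
  Y.hom.hom.toOrderHom ((DSet.xi Y.left).symm ⟨a, ha⟩)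

lemma nonempty_hom_vertex_valueAt (Y : CostructuredArrow (pin n) d) (a : Fin (n + 1))
    (ha : a ∈ Y.left.1) : Nonempty (vertex d a (valueAt d Y a ha) ⟶ Y) := by
  have hle : DSet.single a ≤ Y.left := Finset.singleton_subset_iff.mpr ha
  refine ⟨CostructuredArrow.homMk (homOfLE hle) (Truncated.Hom.ext _ _ (OrderHom.ext _ _ ?_))⟩
  funext i
  have hxi : pinFun hle i = (DSet.xi Y.left).symm ⟨a, ha⟩ := by
    rw [OrderIso.eq_symm_apply]
    exact Subtype.ext ((pinFun_coe hle i).trans (DSet.xi_single_apply a i))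
  exact congrArg Y.hom.hom.toOrderHom hxi

def pairStep (a b : Fin (n + 1)) {j j' : Fin (d.obj.len + 1)} (hj : j ≤ j') :
    CostructuredArrow (pin n) d :=
  CostructuredArrow.mk (Y := DSet.pair a b)
    (ObjectProperty.homMk (Hom.mk ((stepOrderHom a hj).comp
      ((OrderHom.Subtype.val _).comp (OrderHomClass.toOrderHom (DSet.xi (DSet.pair a b)))))) :
      (pin n).obj (DSet.pair a b) ⟶ d)

lemma zigzag_vertex_of_lt {a b : Fin (n + 1)} (hab : a < b) {j j' : Fin (d.obj.len + 1)}
    (hj : j ≤ j') : Zigzag (vertex d a j) (vertex d b j') := by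
  let Y := pairStep d a b hj
  have haY : a ∈ Y.left.1 := Finset.mem_insert_self a {b}
  have hbY : b ∈ Y.left.1 := Finset.mem_insert_of_mem (Finset.mem_singleton_self b)
  have ha : valueAt d Y a haY = j := by
    change stepOrderHom a hj (DSet.xi (DSet.pair a b) ((DSet.xi _).symm ⟨a, _⟩) : Fin (n + 1)) = j
    simp
  have hb : valueAt d Y b hbY = j' := by
    change stepOrderHom a hj (DSet.xi (DSet.pair a b) ((DSet.xi _).symm ⟨b, _⟩) : Fin (n + 1)) = j'
    simp [hab.not_ge]
  obtain ⟨f⟩ := ha ▸ nonempty_hom_vertex_valueAt d Y a haY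
  obtain ⟨g⟩ := hb ▸ nonempty_hom_vertex_valueAt d Y b hbY
  exact (Zigzag.of_hom f).trans (Zigzag.of_inv g)

def lastVertex : CostructuredArrow (pin n) d := vertex d (Fin.last n) (Fin.last _)

lemma zigzag_vertex_lastVertex (a : Fin (n + 1)) (j : Fin (d.obj.len + 1)) :
    Zigzag (vertex d a j) (lastVertex d) := by
  rcases (Fin.le_last a).lt_or_eq with ha | rfl
  · exact zigzag_vertex_of_lt d ha (Fin.le_last j)
  by_cases h0 : (0 : Fin (n + 1)) < Fin.last n
  · exact (zigzag_vertex_of_lt d h0 (Fin.zero_le j)).symm.trans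
      (zigzag_vertex_of_lt d h0 (Fin.zero_le _))
  · -- here `n = 0`, so `d = [0]` has the single vertex `j`
    have hj : j = Fin.last _ := by
      have := d.property
      simp only [Fin.lt_def, Fin.val_zero, Fin.val_last, not_lt, Nat.le_zero] at h0 this
      exact Fin.ext (by omega)
    rw [hj]
    rfl

lemma zigzag_lastVertex (Y : CostructuredArrow (pin n) d) :
    Zigzag Y (lastVertex d) := by
  obtain ⟨a, ha⟩ := Y.left.2
  obtain ⟨f⟩ := nonempty_hom_vertex_valueAt d Y a ha
  exact (Zigzag.of_inv f).trans (zigzag_vertex_lastVertex d a _)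

instance isConnected_costructuredArrow : IsConnected (CostructuredArrow (pin n) d) :=
  have : Nonempty (CostructuredArrow (pin n) d) := ⟨vertex d 0 0⟩
  zigzag_isConnected fun Y₁ Y₂ =>
    (zigzag_lastVertex d Y₁).trans (zigzag_lastVertex d Y₂).symm

end pin

/-- For every integer `n ≥ 0`, the functor `π_n : D_n ⥤ Δ^{(n)}` is an initial
functor: for every object `[k]` of `Δ^{(n)}` (`0 ≤ k ≤ n`), the comma category
`π_n ↓ [k]` of costructured arrows from `π_n` to `[k]` is nonempty and connected. -/
theorem pin_initial (n : ℕ) : (pin n).Initial :=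
  ⟨fun _ => inferInstance⟩
end
end

section
/- Let n ≥ 1 and K ≥ 0 be integers. For 0 ≤ j ≤ K let x_j ∈ P_n^K denote the element whose underlying set is {n} and whose K-fold interval decomposition places n in the part with index j. Let P̃_n^K denote the induced subposet P_n^K ∖ {x_0, …, x_K}. Then: (1) the map i : P_{n−1}^K → P̃_n^K induced by the inclusion {0,…,n−1} ⊆ {0,…,n} is a well-defined order-preserving embedding (its image contains no x_j); (2) the map f : P̃_n^K → P_{n−1}^K given by f(S, {S_j}) = (S ∖ {n}, {S_j ∖ {n}}) is well defined (S ∖ {n} is nonempty for every element of P̃_n^K) and order-preserving; (3) f ∘ i = id on P_{n−1}^K, and i(f(y)) ≤ y for every y ∈ P̃_n^K; equivalently, i and f form a Galois connection with i the lower adjoint. -/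
/-- The element `x_j` of `P_n^K` whose underlying set is `{n}` and whose `K`-fold
interval decomposition places `n` in the part with index `j`. -/
def xel (n K : ℕ) (j : Fin (K + 1)) : IntervalDecomp (Fin (n + 1)) K :=
  ⟨fun i => if i = j then {Fin.last n} else ∅, ⟨j, by simp⟩, by
    intro i i' hii' x hx y hy
    by_cases hi : i = j
    · by_cases hi' : i' = j
      · exact absurd (hi.trans hi'.symm) (ne_of_lt hii')
      · simp [hi'] at hy
    · simp [hi] at hx⟩

/-- The induced subposet `P̃_n^K = P_n^K ∖ {x_0, …, x_K}`. -/
abbrev PtildeNK (n K : ℕ) : Type :=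
  {y : IntervalDecomp (Fin (n + 1)) K // ∀ j : Fin (K + 1), y ≠ xel n K j}

/-!
`i` and `f` are push-forward and pull-back of decompositions along the order embedding
`Fin.castSucc`. For any order embedding the push-forward is left adjoint to the pull-back,
and pulling back a push-forward gives back the original decomposition. The only point specific
to `P̃_n^K` is that the pull-back stays nonempty there, because the decompositions with underlying
set `{n}` are exactly the removed `x_j`.
-/

namespace IntervalDecomp

variable {α β : Type} [LinearOrder α] [LinearOrder β] {k : ℕ}

lemma le_iff {P Q : IntervalDecomp α k} : P ≤ Q ↔ ∀ j, P.val j ⊆ Q.val j := Iff.rfl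

lemma disjoint_parts (P : IntervalDecomp α k) {i i' : Fin (k + 1)} (h : i ≠ i') :
    Disjoint (P.val i) (P.val i') := by
  rw [Finset.disjoint_left]
  intro x hx hx'
  rcases h.lt_or_gt with h | h
  · exact lt_irrefl x (P.prop.2 i i' h x hx x hx')
  · exact lt_irrefl x (P.prop.2 i' i h x hx' x hx)

def map (e : α ↪o β) (P : IntervalDecomp α k) : IntervalDecomp β k :=
  ⟨fun j => (P.val j).map e.toEmbedding,
    P.prop.1.imp fun _ hj => hj.map,
    by
      intro i i' h _ hx _ hy
      obtain ⟨a, ha, rfl⟩ := Finset.mem_map.mp hx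
      obtain ⟨b, hb, rfl⟩ := Finset.mem_map.mp hy
      exact e.lt_iff_lt.mpr (P.prop.2 i i' h a ha b hb)⟩

noncomputable def comap (e : α ↪o β) (Q : IntervalDecomp β k)
    (hQ : ∃ j, ∃ a, e a ∈ Q.val j) : IntervalDecomp α k :=
  ⟨fun j => (Q.val j).preimage e e.injective.injOn,
    hQ.imp fun _ ⟨a, ha⟩ => ⟨a, Finset.mem_preimage.mpr ha⟩,
    fun i i' h _ ha _ hb =>
      e.lt_iff_lt.mp (Q.prop.2 i i' h _ (Finset.mem_preimage.mp ha) _ (Finset.mem_preimage.mp hb))⟩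

variable (e : α ↪o β)

lemma map_le_iff_le_comap {P : IntervalDecomp α k} {Q : IntervalDecomp β k}
    (hQ : ∃ j, ∃ a, e a ∈ Q.val j) : map e P ≤ Q ↔ P ≤ comap e Q hQ := by
  simp only [le_iff, map, comap, Finset.map_subset_iff_subset_preimage]
  rfl

lemma comap_map (P : IntervalDecomp α k) (h : ∃ j, ∃ a, e a ∈ (map e P).val j) :
    comap e (map e P) h = P := by
  ext j a
  simp [map, comap]

end IntervalDecomp

lemma map_castSucc_ne_xel {n K : ℕ} (P : IntervalDecomp (Fin n) K) (j : Fin (K + 1)) :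
    P.map Fin.castSuccOrderEmb ≠ xel n K j := by
  intro h
  have hlast : Fin.last n ∈ (P.map Fin.castSuccOrderEmb).val j := by simp [h, xel]
  obtain ⟨a, -, ha⟩ := Finset.mem_map.mp hlast
  exact Fin.castSucc_ne_last a ha

/-- If no part met `{0, …, n-1}`, all parts would lie in `{n}`, and disjointness of the parts
would force `Q = x_j`. -/
lemma exists_castSucc_mem_of_ne_xel {n K : ℕ} (Q : IntervalDecomp (Fin (n + 1)) K)
    (hQ : ∀ j, Q ≠ xel n K j) : ∃ j, ∃ a : Fin n, Fin.castSuccOrderEmb a ∈ Q.val j := by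
  by_contra! h
  have h_sub : ∀ i, Q.val i ⊆ {Fin.last n} := by
    intro i x hx
    obtain ⟨a, rfl⟩ | rfl := Fin.eq_castSucc_or_eq_last x
    · exact absurd hx (h i a)
    · exact Finset.mem_singleton_self _
  obtain ⟨j₀, x, hx⟩ := Q.prop.1
  have hlast : Fin.last n ∈ Q.val j₀ := Finset.mem_singleton.mp (h_sub j₀ hx) ▸ hx
  refine hQ j₀ (Subtype.ext (funext fun i => ?_))
  simp only [xel]
  split_ifs with hi
  · subst hi
    exact (h_sub i).antisymm (Finset.singleton_subset_iff.mpr hlast)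
  · refine Finset.eq_empty_of_forall_notMem fun y hy => ?_
    rw [Finset.mem_singleton.mp (h_sub i hy)] at hy
    exact Finset.disjoint_left.mp (Q.disjoint_parts hi) hy hlast

namespace PtildeNK

variable {n K : ℕ}

def incl (P : IntervalDecomp (Fin n) K) : PtildeNK n K :=
  ⟨P.map Fin.castSuccOrderEmb, map_castSucc_ne_xel P⟩

noncomputable def restrict (Q : PtildeNK n K) : IntervalDecomp (Fin n) K :=
  Q.val.comap Fin.castSuccOrderEmb (exists_castSucc_mem_of_ne_xel Q.val Q.prop)

lemma gc_incl_restrict : GaloisConnection (incl (n := n) (K := K)) restrict :=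
  fun _ _ => IntervalDecomp.map_le_iff_le_comap _ _

lemma restrict_incl (P : IntervalDecomp (Fin n) K) : restrict (incl P) = P :=
  IntervalDecomp.comap_map _ _ _

lemma map_restrict (Q : PtildeNK n K) (j : Fin (K + 1)) :
    ((restrict Q).val j).map Fin.castSuccEmb = (Q.val.val j).erase (Fin.last n) := by
  ext x
  obtain ⟨a, rfl⟩ | rfl := Fin.eq_castSucc_or_eq_last x
  · simp [restrict, IntervalDecomp.comap]
  · simp

end PtildeNK

theorem retraction_galois_connection_general (n K : ℕ) :
    ∃ (i : IntervalDecomp (Fin n) K → PtildeNK n K)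
      (f : PtildeNK n K → IntervalDecomp (Fin n) K),
      (∀ (P : IntervalDecomp (Fin n) K) (j : Fin (K + 1)),
          ((i P).val).val j = (P.val j).map Fin.castSuccEmb) ∧
      (∀ (Q : PtildeNK n K) (j : Fin (K + 1)),
          ((f Q).val j).map Fin.castSuccEmb = ((Q.val).val j).erase (Fin.last n)) ∧
      (∀ P P' : IntervalDecomp (Fin n) K, i P ≤ i P' ↔ P ≤ P') ∧
      Monotone f ∧
      (∀ P : IntervalDecomp (Fin n) K, f (i P) = P) ∧
      (∀ y : PtildeNK n K, i (f y) ≤ y) ∧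
      GaloisConnection i f := by
  have gc := PtildeNK.gc_incl_restrict (n := n) (K := K)
  refine ⟨PtildeNK.incl, PtildeNK.restrict, fun _ _ => rfl, PtildeNK.map_restrict,
    fun P P' => ?_, gc.monotone_u, PtildeNK.restrict_incl, gc.l_u_le, gc⟩
  rw [gc P, PtildeNK.restrict_incl]

/-- Let `n ≥ 1` and `K ≥ 0`.  (1) The map `i : P_{n-1}^K → P̃_n^K` induced by the
inclusion `{0,…,n-1} ⊆ {0,…,n}` is a well-defined order-preserving embedding (its
image contains no `x_j`); (2) the map `f : P̃_n^K → P_{n-1}^K`,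
`f(S, {S_j}) = (S ∖ {n}, {S_j ∖ {n}})`, is well defined and order-preserving;
(3) `f ∘ i = id` and `i(f(y)) ≤ y` for every `y ∈ P̃_n^K`; equivalently, `i` and `f`
form a Galois connection with `i` the lower adjoint. -/
theorem retraction_galois_connection (n K : ℕ) (hn : 1 ≤ n) :
    ∃ (i : IntervalDecomp (Fin n) K → PtildeNK n K)
      (f : PtildeNK n K → IntervalDecomp (Fin n) K),
      (∀ (P : IntervalDecomp (Fin n) K) (j : Fin (K + 1)),
          ((i P).val).val j = (P.val j).map Fin.castSuccEmb) ∧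
      (∀ (Q : PtildeNK n K) (j : Fin (K + 1)),
          ((f Q).val j).map Fin.castSuccEmb = ((Q.val).val j).erase (Fin.last n)) ∧
      (∀ P P' : IntervalDecomp (Fin n) K, i P ≤ i P' ↔ P ≤ P') ∧
      Monotone f ∧
      (∀ P : IntervalDecomp (Fin n) K, f (i P) = P) ∧
      (∀ y : PtildeNK n K, i (f y) ≤ y) ∧
      GaloisConnection i f :=
  retraction_galois_connection_general n K
end

section
/- Let n ≥ 1, K ≥ 0 and 0 ≤ j ≤ K be integers, and let x_j ∈ P_n^K denote the element whose underlying set is {n} and whose K-fold interval decomposition places n in the part with index K−j. Then the induced subposet Q_j = { y ∈ P_n^K : x_j ≤ y and y ≠ x_j } is order-isomorphic to P_{n−1}^{K−j}; an isomorphism is given by sending y = (S, {S_i}_{0≤i≤K}) (which necessarily has n ∈ S_{K−j}, S ≠ {n}, and S_i = ∅ for all i > K−j) to (S ∖ {n}, (S_0, …, S_{K−j−1}, S_{K−j} ∖ {n})). -/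
namespace UpperAux

variable {n K m : ℕ}

lemma xel_val (n K : ℕ) (j i : Fin (K + 1)) :
    (xel n K j).val i = if i = j then {Fin.last n} else ∅ := rfl

lemma castSuccEmb_apply {k : ℕ} (a : Fin k) : Fin.castSuccEmb a = a.castSucc := rfl

noncomputable def F (s : Finset (Fin (n + 1))) : Finset (Fin n) :=
  s.preimage Fin.castSucc (Fin.castSucc_injective n).injOn

lemma mem_F {s : Finset (Fin (n + 1))} {x : Fin n} : x ∈ F s ↔ x.castSucc ∈ s :=
  Finset.mem_preimage

lemma map_F (s : Finset (Fin (n + 1))) :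
    (F s).map Fin.castSuccEmb = s.erase (Fin.last n) := by
  ext x
  constructor
  · intro hx
    obtain ⟨a, ha, rfl⟩ := Finset.mem_map.mp hx
    exact Finset.mem_erase.mpr ⟨(Fin.castSucc_lt_last a).ne, mem_F.mp ha⟩
  · intro hx
    obtain ⟨hxl, hxs⟩ := Finset.mem_erase.mp hx
    exact Finset.mem_map.mpr ⟨x.castPred hxl,
      mem_F.mpr (by rwa [Fin.castSucc_castPred]), Fin.castSucc_castPred x hxl⟩

variable (hmK : m < K + 1)

section facts
variable {y : IntervalDecomp (Fin (n + 1)) K} (hle : xel n K ⟨m, hmK⟩ ≤ y)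
include hle

lemma last_mem : Fin.last n ∈ y.val ⟨m, hmK⟩ := by
  have := hle ⟨m, hmK⟩
  rw [xel_val] at this
  exact this (by simp)

lemma empty_of_gt {i : Fin (K + 1)} (hi : m < i.val) : y.val i = ∅ := by
  rw [Finset.eq_empty_iff_forall_notMem]
  intro z hz
  have := y.2.2 ⟨m, hmK⟩ i (by rw [Fin.lt_def]; exact hi) _ (last_mem hmK hle) z hz
  exact absurd (Fin.le_last z) (not_le.mpr this)

lemma last_notMem_of_lt {i : Fin (K + 1)} (hi : i.val < m) : Fin.last n ∉ y.val i := by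
  intro hz
  exact lt_irrefl _ (y.2.2 i ⟨m, hmK⟩ (by rw [Fin.lt_def]; exact hi) _ hz _ (last_mem hmK hle))

lemma exists_extra (hne : y ≠ xel n K ⟨m, hmK⟩) :
    ∃ i : Fin (m + 1), ∃ z : Fin n,
      z.castSucc ∈ y.val (Fin.castLE (by omega) i) := by
  have hne' : y.val ≠ (xel n K ⟨m, hmK⟩).val := fun h => hne (Subtype.ext h)
  have : ∃ i, y.val i ≠ (xel n K ⟨m, hmK⟩).val i := by
    by_contra h
    push_neg at h
    exact hne' (funext h)
  obtain ⟨i, hi⟩ := this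
  have hsub : (xel n K ⟨m, hmK⟩).val i ⊆ y.val i := hle i
  obtain ⟨z, hz, hz'⟩ := Finset.exists_of_ssubset (lt_of_le_of_ne hsub (Ne.symm hi))
  have him : i.val ≤ m := by
    by_contra h
    rw [empty_of_gt hmK hle (by omega)] at hz
    exact absurd hz (Finset.notMem_empty z)
  have hzl : z ≠ Fin.last n := by
    rintro rfl
    rcases Nat.lt_or_ge i.val m with h | h
    · exact last_notMem_of_lt hmK hle h hz
    · have hi' : i.val = m := by omega
      have : i = ⟨m, hmK⟩ := Fin.ext hi'
      subst this
      rw [xel_val] at hz'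
      simp at hz'
  refine ⟨⟨i.val, by omega⟩, z.castPred hzl, ?_⟩
  have : Fin.castLE (by omega : m + 1 ≤ K + 1) ⟨i.val, by omega⟩ = i := Fin.ext rfl
  rw [this, Fin.castSucc_castPred]
  exact hz

end facts

noncomputable def fwd (y : {y : IntervalDecomp (Fin (n + 1)) K //
    xel n K ⟨m, hmK⟩ ≤ y ∧ y ≠ xel n K ⟨m, hmK⟩}) : IntervalDecomp (Fin n) m :=
  ⟨fun i => F (y.val.val (Fin.castLE (by omega) i)), by
    obtain ⟨i, z, hz⟩ := exists_extra hmK y.2.1 y.2.2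
    exact ⟨i, z, mem_F.mpr hz⟩, by
    intro i i' hii' a ha b hb
    have := y.val.2.2 (Fin.castLE (by omega) i) (Fin.castLE (by omega) i')
      (by rw [Fin.lt_def]; exact hii') _ (mem_F.mp ha) _ (mem_F.mp hb)
    rw [Fin.lt_def] at this ⊢
    exact this⟩

def bwdP (Q : IntervalDecomp (Fin n) m) : Fin (K + 1) → Finset (Fin (n + 1)) :=
  fun i => if h : i.val ≤ m then
    (Q.val ⟨i.val, Nat.lt_succ_of_le h⟩).map Fin.castSuccEmb ∪
      (if i.val = m then {Fin.last n} else ∅)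
  else ∅

lemma mem_bwdP {Q : IntervalDecomp (Fin n) m} {i : Fin (K + 1)} {z : Fin (n + 1)} :
    z ∈ bwdP Q i ↔ (∃ h : i.val ≤ m, ∃ a ∈ Q.val ⟨i.val, Nat.lt_succ_of_le h⟩,
      a.castSucc = z) ∨ (i.val = m ∧ z = Fin.last n) := by
  unfold bwdP
  by_cases h : i.val ≤ m
  · rw [dif_pos h]
    by_cases h' : i.val = m
    · simp only [if_pos h', Finset.mem_union, Finset.mem_map, Finset.mem_singleton,
        castSuccEmb_apply]
      constructor
      · rintro (⟨a, ha, rfl⟩ | rfl)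
        · exact Or.inl ⟨h, a, ha, rfl⟩
        · exact Or.inr ⟨h', rfl⟩
      · rintro (⟨_, a, ha, rfl⟩ | ⟨_, rfl⟩)
        · exact Or.inl ⟨a, ha, rfl⟩
        · exact Or.inr rfl
    · simp only [if_neg h', Finset.union_empty, Finset.mem_map, castSuccEmb_apply]
      constructor
      · rintro ⟨a, ha, rfl⟩
        exact Or.inl ⟨h, a, ha, rfl⟩
      · rintro (⟨_, a, ha, rfl⟩ | ⟨hm', _⟩)
        · exact ⟨a, ha, rfl⟩
        · exact absurd hm' h'
  · rw [dif_neg h]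
    simp only [Finset.notMem_empty, false_iff]
    rintro (⟨h', _⟩ | ⟨h', _⟩)
    · exact h h'
    · exact h (le_of_eq h')

def bwd (Q : IntervalDecomp (Fin n) m) :
    {y : IntervalDecomp (Fin (n + 1)) K //
      xel n K ⟨m, hmK⟩ ≤ y ∧ y ≠ xel n K ⟨m, hmK⟩} := by
  refine ⟨⟨bwdP Q, ⟨⟨m, hmK⟩, Fin.last n, ?_⟩, ?_⟩, ?_, ?_⟩
  · exact mem_bwdP.mpr (Or.inr ⟨rfl, rfl⟩)
  · intro i i' hii' x hx y hy
    rcases mem_bwdP.mp hx with ⟨hi, a, ha, rfl⟩ | ⟨hi, rfl⟩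
    · rcases mem_bwdP.mp hy with ⟨hi', b, hb, rfl⟩ | ⟨hi', rfl⟩
      · have hlt : (⟨i.val, Nat.lt_succ_of_le hi⟩ : Fin (m + 1)) <
            ⟨i'.val, Nat.lt_succ_of_le hi'⟩ := by
          rw [Fin.lt_def]; exact hii'
        have := Q.2.2 _ _ hlt _ ha _ hb
        rw [Fin.lt_def] at this ⊢
        exact this
      · exact Fin.castSucc_lt_last a
    · exfalso
      have h1 : i.val < i'.val := hii'
      rcases mem_bwdP.mp hy with ⟨hi', b, hb, rfl⟩ | ⟨hi', rfl⟩ <;> omega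
  · intro i z hz
    rw [xel_val] at hz
    by_cases h : i = ⟨m, hmK⟩
    · rw [if_pos h, Finset.mem_singleton] at hz
      subst hz
      subst h
      exact mem_bwdP.mpr (Or.inr ⟨rfl, rfl⟩)
    · rw [if_neg h] at hz
      exact absurd hz (Finset.notMem_empty z)
  · intro h
    obtain ⟨i, a, ha⟩ := Q.2.1
    have hmem : a.castSucc ∈ bwdP Q (Fin.castLE (by omega : m + 1 ≤ K + 1) i) :=
      mem_bwdP.mpr (Or.inl ⟨Nat.lt_succ_iff.mp i.isLt, a, ha, rfl⟩)
    have hval : bwdP Q (Fin.castLE (by omega : m + 1 ≤ K + 1) i) =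
        (xel n K ⟨m, hmK⟩).val (Fin.castLE (by omega : m + 1 ≤ K + 1) i) :=
      congrFun (congrArg Subtype.val h) _
    rw [hval, xel_val] at hmem
    split at hmem
    · rw [Finset.mem_singleton] at hmem
      exact (Fin.castSucc_lt_last a).ne hmem
    · exact absurd hmem (Finset.notMem_empty _)


lemma bwd_fwd (y : {y : IntervalDecomp (Fin (n + 1)) K //
    xel n K ⟨m, hmK⟩ ≤ y ∧ y ≠ xel n K ⟨m, hmK⟩}) : bwd hmK (fwd hmK y) = y := by
  refine Subtype.ext (Subtype.ext (funext fun i => ?_))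
  show bwdP (fwd hmK y) i = y.val.val i
  unfold bwdP
  by_cases h : i.val ≤ m
  · rw [dif_pos h]
    have hcast : Fin.castLE (by omega : m + 1 ≤ K + 1)
        (⟨i.val, Nat.lt_succ_of_le h⟩ : Fin (m + 1)) = i := Fin.ext rfl
    have hF : ((fwd hmK y).val ⟨i.val, Nat.lt_succ_of_le h⟩).map Fin.castSuccEmb =
        (y.val.val i).erase (Fin.last n) := by
      show (F (y.val.val (Fin.castLE _ ⟨i.val, Nat.lt_succ_of_le h⟩))).map Fin.castSuccEmb = _
      rw [hcast, map_F]
    rw [hF]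
    by_cases h' : i.val = m
    · rw [if_pos h']
      have hi : i = ⟨m, hmK⟩ := Fin.ext h'
      subst hi
      rw [Finset.union_comm, ← Finset.insert_eq,
        Finset.insert_erase (last_mem hmK y.2.1)]
    · rw [if_neg h', Finset.union_empty,
        Finset.erase_eq_of_notMem (last_notMem_of_lt hmK y.2.1 (by omega))]
  · rw [dif_neg h, empty_of_gt hmK y.2.1 (by omega)]

lemma fwd_bwd (Q : IntervalDecomp (Fin n) m) : fwd hmK (bwd hmK Q) = Q := by
  refine Subtype.ext (funext fun i => ?_)
  show F (bwdP Q (Fin.castLE (by omega) i)) = Q.val i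
  ext a
  rw [mem_F, mem_bwdP]
  constructor
  · rintro (⟨h, b, hb, hba⟩ | ⟨_, hlast⟩)
    · have : b = a := Fin.castSucc_injective n hba
      subst this
      exact hb
    · exact absurd hlast (Fin.castSucc_lt_last a).ne
  · intro ha
    exact Or.inl ⟨Nat.lt_succ_iff.mp i.isLt, a, ha, rfl⟩

lemma fwd_le_fwd_iff {y y' : {y : IntervalDecomp (Fin (n + 1)) K //
    xel n K ⟨m, hmK⟩ ≤ y ∧ y ≠ xel n K ⟨m, hmK⟩}} :
    fwd hmK y ≤ fwd hmK y' ↔ y ≤ y' := by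
  constructor
  · intro h i z hz
    by_cases hi : i.val ≤ m
    · by_cases hzl : z = Fin.last n
      · subst hzl
        have : i = ⟨m, hmK⟩ := by
          rcases Nat.lt_or_ge i.val m with h' | h'
          · exact absurd hz (last_notMem_of_lt hmK y.2.1 h')
          · exact Fin.ext (show i.val = m by omega)
        subst this
        exact last_mem hmK y'.2.1
      · have hcast : Fin.castLE (by omega : m + 1 ≤ K + 1)
            (⟨i.val, Nat.lt_succ_of_le hi⟩ : Fin (m + 1)) = i := Fin.ext rfl
        have h1 : z.castPred hzl ∈
            F (y.val.val (Fin.castLE (by omega : m + 1 ≤ K + 1)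
              (⟨i.val, Nat.lt_succ_of_le hi⟩ : Fin (m + 1)))) := by
          rw [mem_F, hcast, Fin.castSucc_castPred]
          exact hz
        have h2 : z.castPred hzl ∈
            F (y'.val.val (Fin.castLE (by omega : m + 1 ≤ K + 1)
              (⟨i.val, Nat.lt_succ_of_le hi⟩ : Fin (m + 1)))) :=
          h ⟨i.val, Nat.lt_succ_of_le hi⟩ h1
        have h3 := mem_F.mp h2
        rw [hcast, Fin.castSucc_castPred] at h3
        exact h3
    · rw [empty_of_gt hmK y.2.1 (by omega)] at hz
      exact absurd hz (Finset.notMem_empty z)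
  · intro h i a ha
    have ha' : a ∈ F (y.val.val (Fin.castLE (by omega : m + 1 ≤ K + 1) i)) := ha
    show a ∈ F (y'.val.val (Fin.castLE (by omega : m + 1 ≤ K + 1) i))
    rw [mem_F] at ha' ⊢
    exact h _ ha'


noncomputable def iso :
    {y : IntervalDecomp (Fin (n + 1)) K //
      xel n K ⟨m, hmK⟩ ≤ y ∧ y ≠ xel n K ⟨m, hmK⟩} ≃o IntervalDecomp (Fin n) m where
  toFun := fwd hmK
  invFun := bwd hmK
  left_inv := bwd_fwd hmK
  right_inv := fwd_bwd hmK
  map_rel_iff' := fwd_le_fwd_iff hmK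

end UpperAux

theorem upperAux_main (n K m : ℕ) (hmK : m < K + 1) :
    ∃ e : {y : IntervalDecomp (Fin (n + 1)) K //
            xel n K ⟨m, hmK⟩ ≤ y ∧ y ≠ xel n K ⟨m, hmK⟩} ≃o
          IntervalDecomp (Fin n) m,
      ∀ y (i : Fin (m + 1)),
        ((e y).val i).map Fin.castSuccEmb =
          ((y.val).val (Fin.castLE (by omega) i)).erase (Fin.last n) := by
  refine ⟨UpperAux.iso hmK, fun y i => ?_⟩
  have : ((UpperAux.iso hmK) y).val i =
      UpperAux.F (y.val.val (Fin.castLE (by omega : m + 1 ≤ K + 1) i)) := rfl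
  rw [this, UpperAux.map_F]


/-- Let `n ≥ 1`, `K ≥ 0` and `0 ≤ j ≤ K`, and let `x_j ∈ P_n^K` be the element whose
underlying set is `{n}`, with `n` placed in the part of index `K − j`.  Then the
induced subposet `Q_j = {y ∈ P_n^K | x_j ≤ y, y ≠ x_j}` is order-isomorphic to
`P_{n-1}^{K-j}`, an isomorphism being given by sending `y = (S, (S_0, …, S_K))` to
`(S ∖ {n}, (S_0, …, S_{K-j-1}, S_{K-j} ∖ {n}))`. -/
theorem upper_set_orderIso (n K j : ℕ) (hn : 1 ≤ n) (hj : j ≤ K) :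
    ∃ e : {y : IntervalDecomp (Fin (n + 1)) K //
            xel n K ⟨K - j, by omega⟩ ≤ y ∧ y ≠ xel n K ⟨K - j, by omega⟩} ≃o
          IntervalDecomp (Fin n) (K - j),
      ∀ y (i : Fin (K - j + 1)),
        ((e y).val i).map Fin.castSuccEmb =
          ((y.val).val (Fin.castLE (by omega) i)).erase (Fin.last n) :=
  upperAux_main n K (K - j) (by omega)
end

section
/- Let A be a commutative Noetherian ring, I ⊆ A an ideal, and M a finitely generated A-module. Then for every i ≥ 0 and every n ≥ 0 there exists m ≥ n such that the homomorphism Tor_i^A(A/I, I^m M) → Tor_i^A(A/I, I^n M) induced by the inclusion I^m M ⊆ I^n M is the zero map. (Equivalently: the pro-abelian group {Tor_i^A(A/I, I^k M)}_{k≥0} is pro-isomorphic to zero.) -/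
/-!
Resolve `I^n M` by finite free modules `F_j` with syzygies `K_j ⊆ F_j`, and pick Artin–Rees
constants `a_j` with `I^s F_j ∩ K_j ⊆ I^(s - a_j) K_j` for all `s`. For
`c = a_0 + ⋯ + a_(i-1) + 1` the inclusion `I^(n+c) M ⊆ I^n M` lands in `I^c (I^n M)`, so it lifts
to a chain map between finite free resolutions whose degree-`j` component lands in
`I^(c - a_0 - ⋯ - a_(j-1)) F_j`: at each step the map to be lifted has values in
`I^e F_j ∩ K_j ⊆ I^(e - a_j) K_j`. In degree `i` this is `I F_i`, which `A/I ⊗ -` kills, so the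
induced map on `Tor_i(A/I, -)` vanishes.
-/

open CategoryTheory CategoryTheory.Limits CategoryTheory.MonoidalCategory LinearMap
open scoped TensorProduct

universe u

section Algebra

variable {A : Type*} [CommRing A]

theorem Module.exists_lift_of_range_le_smul_range {P V W : Type*} [AddCommGroup P] [Module A P]
    [Module.Projective A P] [AddCommGroup V] [Module A V] [AddCommGroup W] [Module A W]
    (J : Ideal A) (u : W →ₗ[A] V) (f : P →ₗ[A] V) (hf : range f ≤ J • range u) :
    ∃ g : P →ₗ[A] W, range g ≤ J • ⊤ ∧ u ∘ₗ g = f := by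
  have hJ : J • range u = (J • ⊤ : Submodule A W).map u := by
    rw [Submodule.map_smul'', Submodule.map_top]
  obtain ⟨h, hh⟩ := Module.projective_lifting_property (u.submoduleMap (J • ⊤))
    (f.codRestrict _ fun x => hJ ▸ hf (mem_range_self f x)) (u.submoduleMap_surjective _)
  refine ⟨(J • ⊤ : Submodule A W).subtype ∘ₗ h, ?_, ?_⟩
  · rw [range_comp]
    exact Submodule.map_subtype_le _ _
  · ext x
    exact congrArg Subtype.val (LinearMap.congr_fun hh x)

theorem Ideal.exists_pow_smul_top_inf_le_pow_sub_smul [IsNoetherianRing A] {M : Type*}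
    [AddCommGroup M] [Module A M] [Module.Finite A M] (I : Ideal A) (N : Submodule A M) :
    ∃ a : ℕ, ∀ s, I ^ s • ⊤ ⊓ N ≤ I ^ (s - a) • N := by
  obtain ⟨a, ha⟩ := I.exists_pow_inf_eq_pow_smul N
  refine ⟨a, fun s => ?_⟩
  rcases le_or_gt a s with h | h
  · rw [ha s h]
    exact smul_mono_right _ inf_le_right
  · rw [Nat.sub_eq_zero_of_le h.le, pow_zero, Ideal.one_eq_top, Submodule.top_smul]
    exact inf_le_right

theorem Submodule.range_inclusion_le_smul_top {M : Type*} [AddCommGroup M] [Module A M]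
    (J : Ideal A) {N N' : Submodule A M} (h : N' ≤ N) (hJ : N' ≤ J • N) :
    range (inclusion h) ≤ J • ⊤ := by
  rintro _ ⟨y, rfl⟩
  have hy : (y : M) ∈ (J • ⊤ : Submodule A N).map N.subtype := by
    rw [map_smul'', map_top, range_subtype]
    exact hJ y.2
  obtain ⟨z, hz, hzy⟩ := hy
  rwa [show z = inclusion h y from Subtype.ext hzy] at hz

end Algebra

theorem ModuleCat.quotient_whiskerLeft_eq_zero_of_range_le_smul {A : Type u} [CommRing A]
    (I : Ideal A) {P Q : ModuleCat.{u} A} (f : P ⟶ Q) (hf : range f.hom ≤ I • ⊤) :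
    ModuleCat.of A (A ⧸ I) ◁ f = 0 := by
  have htmul (x : A ⧸ I) (q : Q) (hq : q ∈ (I • ⊤ : Submodule A Q)) :
      (x ⊗ₜ[A] q : (A ⧸ I) ⊗[A] Q) = 0 := by
    refine Submodule.smul_induction_on hq (fun a ha q _ => ?_) (fun p q hp hq => ?_)
    · obtain ⟨b, rfl⟩ := Ideal.Quotient.mk_surjective x
      rw [TensorProduct.tmul_smul, TensorProduct.smul_tmul', Algebra.smul_def,
        Ideal.Quotient.algebraMap_eq, ← map_mul, Ideal.Quotient.eq_zero_iff_mem.2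
        (I.mul_mem_right b ha), TensorProduct.zero_tmul]
    · rw [TensorProduct.tmul_add, hp, hq, add_zero]
  refine ModuleCat.hom_ext (TensorProduct.ext' fun x p => ?_)
  change x ⊗ₜ[A] f p = 0
  exact htmul x (f p) (hf (mem_range_self _ p))

theorem HomologicalComplex.homologyMap_eq_zero_of_f_eq_zero {C ι : Type*} [Category C]
    [HasZeroMorphisms C] {c : ComplexShape ι} {K L : HomologicalComplex C c} (φ : K ⟶ L) (i : ι)
    [K.HasHomology i] [L.HasHomology i] (h : φ.f i = 0) : homologyMap φ i = 0 := by
  have hcycles : cyclesMap φ i = 0 := by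
    rw [← cancel_mono (L.iCycles i), cyclesMap_i, h, Limits.comp_zero, Limits.zero_comp]
  rw [← cancel_epi (K.homologyπ i), homologyπ_naturality, hcycles, Limits.comp_zero,
    Limits.zero_comp]

theorem Tor_map_eq_zero_of_range_f_le_smul {A : Type u} [CommRing A] (I : Ideal A)
    {N N' : ModuleCat.{u} A} {f : N' ⟶ N} {P' : ProjectiveResolution N'}
    {P : ProjectiveResolution N} (φ : P'.complex ⟶ P.complex)
    (hφ : φ ≫ P.π = P'.π ≫ (ChainComplex.single₀ _).map f) (i : ℕ)
    (hi : range (φ.f i).hom ≤ I • ⊤) :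
    ((Tor (ModuleCat A) i).obj (ModuleCat.of A (A ⧸ I))).map f = 0 := by
  rw [Tor_obj, Functor.leftDerived_map_eq _ i f φ hφ]
  have hφ₀ : (((tensoringLeft _).obj (ModuleCat.of A (A ⧸ I))).mapHomologicalComplex _ ⋙
      HomologicalComplex.homologyFunctor _ _ i).map φ = 0 :=
    HomologicalComplex.homologyMap_eq_zero_of_f_eq_zero _ i
      (ModuleCat.quotient_whiskerLeft_eq_zero_of_range_le_smul I _ hi)
  rw [hφ₀, Limits.zero_comp, Limits.comp_zero]

noncomputable section

namespace FinFreeResolution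

variable (A : Type u) [CommRing A]

def coverRank (N : Type*) [AddCommGroup N] [Module A N] [Module.Finite A N] : ℕ :=
  (Module.Finite.exists_fin' A N).choose

def cover (N : Type*) [AddCommGroup N] [Module A N] [Module.Finite A N] :
    (Fin (coverRank A N) → A) →ₗ[A] N :=
  (Module.Finite.exists_fin' A N).choose_spec.choose

theorem cover_surjective (N : Type*) [AddCommGroup N] [Module A N] [Module.Finite A N] :
    Function.Surjective (cover A N) :=
  (Module.Finite.exists_fin' A N).choose_spec.choose_spec

variable [IsNoetherianRing A] (N : Type u) [AddCommGroup N] [Module A N] [Module.Finite A N]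

/-- `syzygy A N j = ⟨k, K⟩` records the `j`-th syzygy `K ⊆ A^k` of `N`, where `A^k` is the
`j`-th term of the resolution. -/
def syzygy : ℕ → Σ k : ℕ, Submodule A (Fin k → A)
  | 0 => ⟨coverRank A N, ker (cover A N)⟩
  | j + 1 => ⟨coverRank A (syzygy j).2, ker (cover A (syzygy j).2)⟩

abbrev freeModule (j : ℕ) : Type u := Fin (syzygy A N j).1 → A

def d (j : ℕ) : freeModule A N (j + 1) →ₗ[A] freeModule A N j :=
  (syzygy A N j).2.subtype ∘ₗ cover A (syzygy A N j).2

def augmentation : freeModule A N 0 →ₗ[A] N :=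
  cover A N

theorem augmentation_surjective : Function.Surjective (augmentation A N) :=
  cover_surjective A N

theorem ker_augmentation : ker (augmentation A N) = (syzygy A N 0).2 := rfl

theorem ker_d (j : ℕ) : ker (d A N j) = (syzygy A N (j + 1)).2 :=
  ker_comp_of_ker_eq_bot _ (Submodule.ker_subtype _)

theorem range_d (j : ℕ) : range (d A N j) = (syzygy A N j).2 :=
  (range_comp_of_range_eq_top _ (range_eq_top.2 (cover_surjective A _))).trans
    (Submodule.range_subtype _)

theorem augmentation_comp_d : augmentation A N ∘ₗ d A N 0 = 0 :=
  range_le_ker_iff.1 (range_d A N 0).le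

theorem d_comp_d (j : ℕ) : d A N j ∘ₗ d A N (j + 1) = 0 :=
  range_le_ker_iff.1 ((range_d A N (j + 1)).trans (ker_d A N j).symm).le

def complex : ChainComplex (ModuleCat.{u} A) ℕ :=
  ChainComplex.of (fun j => ModuleCat.of A (freeModule A N j))
    (fun j => ModuleCat.ofHom (d A N j)) fun j => ModuleCat.hom_ext (d_comp_d A N j)

theorem complex_d (j : ℕ) : (complex A N).d (j + 1) j = ModuleCat.ofHom (d A N j) :=
  ChainComplex.of_d (fun j => ModuleCat.of A (freeModule A N j))
    (fun j => ModuleCat.ofHom (d A N j)) j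

theorem complex_exactAt_succ (j : ℕ) : (complex A N).ExactAt (j + 1) := by
  rw [HomologicalComplex.exactAt_iff' _ (j + 2) (j + 1) j (by simp) (by simp),
    ShortComplex.moduleCat_exact_iff_range_eq_ker]
  change range ((complex A N).d (j + 2) (j + 1)).hom = ker ((complex A N).d (j + 1) j).hom
  rw [complex_d, complex_d]
  exact (range_d A N (j + 1)).trans (ker_d A N j).symm

def π : complex A N ⟶ (ChainComplex.single₀ (ModuleCat A)).obj (ModuleCat.of A N) :=
  (ChainComplex.toSingle₀Equiv _ _).symm ⟨ModuleCat.ofHom (augmentation A N), by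
    rw [complex_d]
    exact ModuleCat.hom_ext (augmentation_comp_d A N)⟩

theorem π_f_zero : (π A N).f 0 = ModuleCat.ofHom (augmentation A N) :=
  ChainComplex.toSingle₀Equiv_symm_apply_f_zero _ _

instance : QuasiIso (π A N) where
  quasiIsoAt
  | 0 => by
    rw [ChainComplex.quasiIsoAt₀_iff, ShortComplex.quasiIso_iff_of_zeros' _ rfl rfl rfl]
    constructor
    · rw [ShortComplex.moduleCat_exact_iff_range_eq_ker]
      change range (d A N 0) = ker (augmentation A N)
      exact (range_d A N 0).trans (ker_augmentation A N).symm
    · rw [ModuleCat.epi_iff_surjective]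
      exact augmentation_surjective A N
  | j + 1 => by
    rw [quasiIsoAt_iff_exactAt' _ _ (ChainComplex.exactAt_succ_single_obj _ _)]
    exact complex_exactAt_succ A N j

def resolution : ProjectiveResolution (ModuleCat.of A N) where
  complex := complex A N
  projective j := by dsimp [complex]; infer_instance
  π := π A N

section Lift

variable {A : Type u} [CommRing A] [IsNoetherianRing A] (I : Ideal A)
  {N N' : Type u} [AddCommGroup N] [Module A N] [Module.Finite A N]
  [AddCommGroup N'] [Module A N'] [Module.Finite A N']

theorem exists_lift_zero (f : N' →ₗ[A] N) (c : ℕ) (hf : range f ≤ I ^ c • ⊤) :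
    ∃ g : freeModule A N' 0 →ₗ[A] freeModule A N 0, range g ≤ I ^ c • ⊤ ∧
      range (g ∘ₗ d A N' 0) ≤ (syzygy A N 0).2 ∧
      augmentation A N ∘ₗ g = f ∘ₗ augmentation A N' := by
  obtain ⟨g, hg, hcomm⟩ := Module.exists_lift_of_range_le_smul_range (I ^ c) (augmentation A N)
    (f ∘ₗ augmentation A N') (by
      rw [range_eq_top.2 (augmentation_surjective A N)]
      exact (range_comp_le_range _ _).trans hf)
  refine ⟨g, hg, ?_, hcomm⟩
  rw [← ker_augmentation, range_le_ker_iff, ← comp_assoc, hcomm, comp_assoc,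
    augmentation_comp_d, LinearMap.comp_zero]

theorem exists_lift_succ {j : ℕ} {a : ℕ}
    (ha : ∀ s, I ^ s • ⊤ ⊓ (syzygy A N j).2 ≤ I ^ (s - a) • (syzygy A N j).2) {e : ℕ}
    (g : freeModule A N' j →ₗ[A] freeModule A N j) (hg : range g ≤ I ^ e • ⊤)
    (hgd : range (g ∘ₗ d A N' j) ≤ (syzygy A N j).2) :
    ∃ g' : freeModule A N' (j + 1) →ₗ[A] freeModule A N (j + 1),
      range g' ≤ I ^ (e - a) • ⊤ ∧ range (g' ∘ₗ d A N' (j + 1)) ≤ (syzygy A N (j + 1)).2 ∧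
      d A N j ∘ₗ g' = g ∘ₗ d A N' j := by
  obtain ⟨g', hg', hcomm⟩ := Module.exists_lift_of_range_le_smul_range (I ^ (e - a)) (d A N j)
    (g ∘ₗ d A N' j) (by
      rw [range_d]
      exact (le_inf ((range_comp_le_range _ _).trans hg) hgd).trans (ha e))
  refine ⟨g', hg', ?_, hcomm⟩
  rw [← ker_d, range_le_ker_iff, ← comp_assoc, hcomm, comp_assoc, d_comp_d, LinearMap.comp_zero]

theorem exists_chainMap_range_le_pow_smul (f : N' →ₗ[A] N) (a : ℕ → ℕ)
    (ha : ∀ j s, I ^ s • ⊤ ⊓ (syzygy A N j).2 ≤ I ^ (s - a j) • (syzygy A N j).2) (c : ℕ)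
    (hf : range f ≤ I ^ c • ⊤) :
    ∃ φ : (resolution A N').complex ⟶ (resolution A N).complex,
      φ ≫ (resolution A N).π =
        (resolution A N').π ≫ (ChainComplex.single₀ _).map (ModuleCat.ofHom f) ∧
      ∀ j, range (φ.f j).hom ≤ I ^ (c - ∑ l ∈ Finset.range j, a l) • ⊤ := by
  let Lift (j : ℕ) := {g : freeModule A N' j →ₗ[A] freeModule A N j //
    range g ≤ I ^ (c - ∑ l ∈ Finset.range j, a l) • ⊤ ∧
      range (g ∘ₗ d A N' j) ≤ (syzygy A N j).2}
  obtain ⟨g₀, hg₀, hgd₀, comm₀⟩ := exists_lift_zero I f c hf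
  have step (j : ℕ) (g : Lift j) : ∃ g' : Lift (j + 1), d A N j ∘ₗ g'.1 = g.1 ∘ₗ d A N' j := by
    obtain ⟨g', hg', hgd', comm⟩ := exists_lift_succ I (ha j) g.1 g.2.1 g.2.2
    exact ⟨⟨g', by rwa [Finset.sum_range_succ, ← Nat.sub_sub], hgd'⟩, comm⟩
  choose next comm using step
  let g (j : ℕ) : Lift j := Nat.rec ⟨g₀, by simpa using hg₀, hgd₀⟩ next j
  refine ⟨ChainComplex.ofHom (fun j => ModuleCat.ofHom (g j).1) fun j => ?_, ?_,
    fun j => (g j).2.1⟩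
  · change _ ≫ (complex A N).d (j + 1) j = (complex A N').d (j + 1) j ≫ _
    rw [complex_d, complex_d]
    exact ModuleCat.hom_ext (comm j (g j))
  · refine HomologicalComplex.hom_ext _ _ fun j => ?_
    cases j with
    | zero =>
      change _ ≫ (π A N).f 0 = (π A N').f 0 ≫ _
      rw [π_f_zero, π_f_zero, ChainComplex.single₀_map_f_zero]
      exact ModuleCat.hom_ext comm₀
    | succ j =>
      exact (HomologicalComplex.isZero_single_obj_X _ 0 _ (j + 1) (by simp)).eq_of_tgt _ _

end Lift

end FinFreeResolution

end

open FinFreeResolution in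
/-- Let `A` be a commutative Noetherian ring, `I ⊆ A` an ideal and `M` a finitely
generated `A`-module.  Then for every `i ≥ 0` and every `n ≥ 0` there exists `m ≥ n`
such that the homomorphism `Tor_i^A(A/I, I^m M) → Tor_i^A(A/I, I^n M)` induced by the
inclusion `I^m M ⊆ I^n M` is the zero map; i.e. the pro-abelian group
`{Tor_i^A(A/I, I^k M)}_k` is pro-isomorphic to zero. -/
theorem tor_pow_smul_pro_zero (A : Type) [CommRing A] [IsNoetherianRing A] (I : Ideal A)
    (M : Type) [AddCommGroup M] [Module A M] [Module.Finite A M] (i n : ℕ) :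
    ∃ m : ℕ, ∃ hm : n ≤ m,
      ((Tor (ModuleCat A) i).obj (ModuleCat.of A (A ⧸ I))).map
          (ModuleCat.ofHom (Submodule.inclusion
            (show (I ^ m • ⊤ : Submodule A M) ≤ (I ^ n • ⊤ : Submodule A M) from
              Submodule.smul_mono_left (Ideal.pow_le_pow_right hm)))) = 0 := by
  choose a ha using fun j =>
    I.exists_pow_smul_top_inf_le_pow_sub_smul (syzygy A (I ^ n • ⊤ : Submodule A M) j).2
  let c := ∑ l ∈ Finset.range i, a l + 1
  have hm : n ≤ n + c := Nat.le_add_right n c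
  refine ⟨n + c, hm, ?_⟩
  have hle : (I ^ (n + c) • ⊤ : Submodule A M) ≤ I ^ c • I ^ n • ⊤ := by
    rw [pow_add, mul_comm, Submodule.mul_smul]
  obtain ⟨φ, hφ, hφ_range⟩ := exists_chainMap_range_le_pow_smul I
    (Submodule.inclusion (Submodule.smul_mono_left (Ideal.pow_le_pow_right hm)))
    a ha c (Submodule.range_inclusion_le_smul_top (I ^ c) _ hle)
  refine Tor_map_eq_zero_of_range_f_le_smul I φ hφ i ?_
  have hc : c - ∑ l ∈ Finset.range i, a l = 1 := Nat.add_sub_cancel_left _ _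
  simpa only [hc, pow_one] using hφ_range i
end

section
/- Let A be a commutative Noetherian ring, I ⊆ A an ideal, and C_• a chain complex of finitely generated A-modules. For k ≥ 0 let I^k C_• denote the subcomplex whose term in degree j is I^k C_j. Then for every degree j and every k ≥ 0: (1) I^k H_j(C_•) is contained in the image of the map H_j(I^k C_•) → H_j(C_•) induced by the inclusion of complexes; and (2) there exists m ≥ k such that the image of H_j(I^m C_•) → H_j(C_•) is contained in I^k H_j(C_•). (Together these say that the natural maps induce a pro-isomorphism between the pro-abelian groups {H_j(I^k C_•)}_k and {I^k H_j(C_•)}_k, i.e., homology of complexes of finitely generated modules commutes with the functor M ↦ {I^k M}.) -/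
/-! The cycles of `I^k C_•` in degree `j` are `I^k C_j ∩ Z_j`, so the image of `H_j(I^k C_•)` in
`H_j(C_•)` is the image of `I^k C_j ∩ Z_j`. This contains `I^k Z_j`, whose image is `I^k H_j(C_•)`.
Conversely, the Artin–Rees lemma for `Z_j ⊆ C_j` gives `c` with `I^(k+c) C_j ∩ Z_j ⊆ I^k Z_j`. -/

open CategoryTheory

section

variable (A : Type) [CommRing A] (I : Ideal A)

/-- The subcomplex `I^k C_•` of a chain complex `C_•` of `A`-modules, whose term in
degree `j` is the submodule `I^k C_j` (the differentials carry `I^k C_j` into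
`I^k C_{j-1}`). -/
noncomputable def idealSmulSubcomplex (k : ℕ) (C : ChainComplex (ModuleCat A) ℤ) :
    ChainComplex (ModuleCat A) ℤ where
  X j := ModuleCat.of A (I ^ k • (⊤ : Submodule A (C.X j)) : Submodule A (C.X j))
  d i j := ModuleCat.ofHom ((C.d i j).hom.restrict (p := I ^ k • ⊤) (q := I ^ k • ⊤)
    (fun x hx => by
      refine Submodule.smul_induction_on hx (fun a ha m _ => ?_) (fun u v hu hv => ?_)
      · rw [map_smul]
        exact Submodule.smul_mem_smul ha trivial
      · rw [map_add]
        exact Submodule.add_mem _ hu hv))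
  shape i j h := by
    have h0 : C.d i j = 0 := C.shape i j h
    ext x
    show (C.d i j).hom x.1 = _
    rw [h0]
    rfl
  d_comp_d' i j l _ _ := by
    ext x
    show (C.d j l).hom ((C.d i j).hom x.1) = _
    have h3 : (C.d i j ≫ C.d j l).hom x.1 = (0 : C.X i ⟶ C.X l).hom x.1 := by
      rw [C.d_comp_d i j l]
    exact h3

/-- The inclusion of chain complexes `I^k C_• ⟶ C_•`. -/
noncomputable def idealSmulSubcomplexIncl (k : ℕ) (C : ChainComplex (ModuleCat A) ℤ) :
    idealSmulSubcomplex A I k C ⟶ C where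
  f j := ModuleCat.ofHom (I ^ k • (⊤ : Submodule A (C.X j))).subtype
  comm' i j _ := by
    ext x
    rfl

end

namespace Submodule

variable {R M N : Type*} [CommRing R] [AddCommGroup M] [Module R M] [AddCommGroup N] [Module R N]

theorem map_smul_top_of_surjective (I : Ideal R) {f : M →ₗ[R] N} (hf : Function.Surjective f) :
    (I • ⊤ : Submodule R M).map f = I • ⊤ := by
  rw [map_smul'', map_top, LinearMap.range_eq_top.mpr hf]

theorem exists_comap_pow_add_smul_top_le [IsNoetherianRing R] [Module.Finite R M] (I : Ideal R)
    {f : N →ₗ[R] M} (hf : Function.Injective f) :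
    ∃ c : ℕ, ∀ k : ℕ, (I ^ (k + c) • ⊤ : Submodule R M).comap f ≤ I ^ k • ⊤ := by
  obtain ⟨c, hc⟩ := I.exists_pow_inf_eq_pow_smul (LinearMap.range f)
  refine ⟨c, fun k x hx => ?_⟩
  have hfx : f x ∈ (I ^ (k + c) • ⊤ ⊓ LinearMap.range f : Submodule R M) := ⟨hx, x, rfl⟩
  rw [hc (k + c) (Nat.le_add_left c k), Nat.add_sub_cancel] at hfx
  have hle : I ^ k • (I ^ c • ⊤ ⊓ LinearMap.range f) ≤ (I ^ k • ⊤ : Submodule R N).map f := by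
    rw [map_smul'', map_top]
    exact smul_mono_right _ inf_le_right
  rw [← comap_map_eq_of_injective hf (I ^ k • ⊤)]
  exact hle hfx

end Submodule

namespace CategoryTheory.ShortComplex

variable {R : Type*} [CommRing R] {S T : ShortComplex (ModuleCat R)}

theorem moduleCat_range_iCycles (S : ShortComplex (ModuleCat R)) :
    LinearMap.range S.iCycles.hom = LinearMap.ker S.g.hom := by
  have hiso : LinearMap.range S.moduleCatCyclesIso.inv.hom = ⊤ :=
    LinearMap.range_eq_top.mpr ((ModuleCat.epi_iff_surjective _).1 inferInstance)
  rw [← LinearMap.range_comp_of_range_eq_top _ hiso, ← ModuleCat.hom_comp,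
    moduleCatCyclesIso_inv_iCycles]
  exact Submodule.range_subtype _

theorem range_homologyMap_eq_map_range_cyclesMap (φ : T ⟶ S) :
    LinearMap.range (homologyMap φ).hom =
      (LinearMap.range (cyclesMap φ).hom).map S.homologyπ.hom := by
  have hπ : LinearMap.range T.homologyπ.hom = ⊤ :=
    LinearMap.range_eq_top.mpr ((ModuleCat.epi_iff_surjective _).1 inferInstance)
  rw [← LinearMap.range_comp_of_range_eq_top _ hπ, ← ModuleCat.hom_comp, homologyπ_naturality,
    ModuleCat.hom_comp, LinearMap.range_comp]

theorem range_cyclesMap_eq_comap_range (φ : T ⟶ S) (hφ : Function.Injective φ.τ₃.hom) :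
    LinearMap.range (cyclesMap φ).hom = (LinearMap.range φ.τ₂.hom).comap S.iCycles.hom := by
  have hi (ζ : T.cycles) : S.iCycles (cyclesMap φ ζ) = φ.τ₂ (T.iCycles ζ) :=
    ConcreteCategory.congr_hom (cyclesMap_i φ) ζ
  apply le_antisymm
  · rintro _ ⟨ζ, rfl⟩
    exact ⟨T.iCycles ζ, (hi ζ).symm⟩
  · rintro z ⟨u, hu⟩
    have hgu : u ∈ LinearMap.ker T.g.hom := by
      refine hφ ?_
      calc φ.τ₃ (T.g u) = S.g (φ.τ₂ u) := (ConcreteCategory.congr_hom φ.comm₂₃ u).symm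
        _ = S.g (S.iCycles z) := by rw [hu]
        _ = 0 := ConcreteCategory.congr_hom S.iCycles_g z
        _ = φ.τ₃ 0 := (map_zero _).symm
    rw [← moduleCat_range_iCycles] at hgu
    obtain ⟨ζ, rfl⟩ := hgu
    exact ⟨ζ, (ModuleCat.mono_iff_injective S.iCycles).1 inferInstance ((hi ζ).trans hu)⟩

end CategoryTheory.ShortComplex

section

variable (A : Type) [CommRing A] (I : Ideal A)

theorem range_homologyMap_idealSmulSubcomplexIncl (k : ℕ) (C : ChainComplex (ModuleCat A) ℤ)
    (j : ℤ) :
    LinearMap.range (HomologicalComplex.homologyMap (idealSmulSubcomplexIncl A I k C) j).hom =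
      ((I ^ k • ⊤ : Submodule A (C.X j)).comap (C.iCycles j).hom).map (C.homologyπ j).hom := by
  have h := ShortComplex.range_homologyMap_eq_map_range_cyclesMap
    ((HomologicalComplex.shortComplexFunctor _ _ j).map (idealSmulSubcomplexIncl A I k C))
  rw [ShortComplex.range_cyclesMap_eq_comap_range _ Subtype.val_injective] at h
  exact h.trans (congrArg (fun N => (N.comap (C.iCycles j).hom).map (C.homologyπ j).hom)
    (Submodule.range_subtype (I ^ k • ⊤)))

/-- Let `A` be a commutative Noetherian ring, `I ⊆ A` an ideal, and `C_•` a chain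
complex of finitely generated `A`-modules.  Then for every degree `j` and every
`k ≥ 0`: (1) `I^k H_j(C_•)` is contained in the image of the map
`H_j(I^k C_•) → H_j(C_•)` induced by the inclusion of complexes; and (2) there exists
`m ≥ k` such that the image of `H_j(I^m C_•) → H_j(C_•)` is contained in
`I^k H_j(C_•)`.  Together these say that the natural maps induce a pro-isomorphism
between the pro-abelian groups `{H_j(I^k C_•)}_k` and `{I^k H_j(C_•)}_k`: homology of
complexes of finitely generated modules commutes with the functor `M ↦ {I^k M}`. -/
theorem homology_idealSmulSubcomplex_pro_iso [IsNoetherianRing A]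
    (C : ChainComplex (ModuleCat A) ℤ) (hfg : ∀ j : ℤ, Module.Finite A (C.X j))
    (j : ℤ) (k : ℕ) :
    ((I ^ k • ⊤ : Submodule A (C.homology j)) ≤
        LinearMap.range
          (HomologicalComplex.homologyMap (idealSmulSubcomplexIncl A I k C) j).hom) ∧
      ∃ m : ℕ, ∃ _hm : k ≤ m,
        LinearMap.range
            (HomologicalComplex.homologyMap (idealSmulSubcomplexIncl A I m C) j).hom ≤
          (I ^ k • ⊤ : Submodule A (C.homology j)) := by
  have hπ : Function.Surjective (C.homologyπ j).hom :=
    (ModuleCat.epi_iff_surjective _).1 inferInstance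
  have hι : Function.Injective (C.iCycles j).hom :=
    (ModuleCat.mono_iff_injective _).1 inferInstance
  have := hfg j
  obtain ⟨c, hc⟩ := Submodule.exists_comap_pow_add_smul_top_le I hι
  rw [← Submodule.map_smul_top_of_surjective (I ^ k) hπ]
  refine ⟨?_, k + c, Nat.le_add_right k c, ?_⟩
  · rw [range_homologyMap_idealSmulSubcomplexIncl]
    exact Submodule.map_mono (Submodule.smul_top_le_comap_smul_top _ _)
  · rw [range_homologyMap_idealSmulSubcomplexIncl]
    exact Submodule.map_mono (hc k)

end
end

section
/- Let R and B be commutative rings and let f : R → B be an additive map (a homomorphism of underlying abelian groups, i.e., of ℤ-modules). Let Sym_ℤ(R) denote the symmetric algebra of R regarded as a ℤ-module, let α_R : Sym_ℤ(R) → R be the ℤ-algebra homomorphism induced by the identity ℤ-linear map R → R via the universal property (and similarly α_B : Sym_ℤ(B) → B), and let Sym(f) : Sym_ℤ(R) → Sym_ℤ(B) be the ℤ-algebra homomorphism functorially induced by the ℤ-linear map f. Then f ∘ α_R = α_B ∘ Sym(f) (as maps of sets Sym_ℤ(R) → B) if and only if f is a unital ring homomorphism. -/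
/-- The commutation relation on the tensor algebra of a `ℤ`-module whose quotient is
the symmetric algebra. -/
def SymRel (M : Type) [AddCommGroup M] : TensorAlgebra ℤ M → TensorAlgebra ℤ M → Prop :=
  fun a b => ∃ x y : M,
    a = TensorAlgebra.ι ℤ x * TensorAlgebra.ι ℤ y ∧
    b = TensorAlgebra.ι ℤ y * TensorAlgebra.ι ℤ x

/-- The symmetric algebra `Sym_ℤ(M)` of a `ℤ`-module (abelian group) `M`: the free
commutative ring on the `ℤ`-module `M`, realized as the tensor algebra modulo the
commutation relation. -/
def SymZ (M : Type) [AddCommGroup M] : Type := RingQuot (SymRel M)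

noncomputable instance (M : Type) [AddCommGroup M] : Ring (SymZ M) :=
  inferInstanceAs (Ring (RingQuot (SymRel M)))

noncomputable instance (M : Type) [AddCommGroup M] : Algebra ℤ (SymZ M) :=
  inferInstanceAs (Algebra ℤ (RingQuot (SymRel M)))

/-- The universal property of `Sym_ℤ`: a `ℤ`-linear map `M → A` into a commutative
ring `A` induces a ring (`ℤ`-algebra) homomorphism `Sym_ℤ(M) → A`. -/
noncomputable def SymZ.lift {M : Type} [AddCommGroup M] {A : Type} [CommRing A]
    (f : M →ₗ[ℤ] A) : SymZ M →ₐ[ℤ] A :=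
  RingQuot.liftAlgHom ℤ ⟨TensorAlgebra.lift ℤ f, by
    rintro a b ⟨x, y, rfl, rfl⟩
    simp [mul_comm]⟩

/-- The structure map `α_R : Sym_ℤ(R) → R` of a commutative ring `R`, viewed as an
algebra over the monad `Sym_ℤ` on abelian groups: the `ℤ`-algebra homomorphism induced
by the identity `ℤ`-linear map `R → R`. -/
noncomputable def SymZ.alpha (R : Type) [CommRing R] : SymZ R →ₐ[ℤ] R :=
  SymZ.lift (LinearMap.id : R →ₗ[ℤ] R)

/-- Functoriality of `Sym_ℤ`: the `ℤ`-algebra homomorphism `Sym_ℤ(M) → Sym_ℤ(N)`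
induced by a `ℤ`-linear map `f : M → N`. -/
noncomputable def SymZ.map {M N : Type} [AddCommGroup M] [AddCommGroup N]
    (f : M →ₗ[ℤ] N) : SymZ M →ₐ[ℤ] SymZ N :=
  RingQuot.liftAlgHom ℤ
    ⟨TensorAlgebra.lift ℤ
        ((RingQuot.mkAlgHom ℤ (SymRel N)).toLinearMap.comp
          ((TensorAlgebra.ι ℤ).comp f)), by
      rintro a b ⟨x, y, rfl, rfl⟩
      rw [map_mul, map_mul]
      erw [TensorAlgebra.lift_ι_apply, TensorAlgebra.lift_ι_apply]
      show RingQuot.mkAlgHom ℤ (SymRel N) (TensorAlgebra.ι ℤ (f x)) *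
            RingQuot.mkAlgHom ℤ (SymRel N) (TensorAlgebra.ι ℤ (f y)) =
          RingQuot.mkAlgHom ℤ (SymRel N) (TensorAlgebra.ι ℤ (f y)) *
            RingQuot.mkAlgHom ℤ (SymRel N) (TensorAlgebra.ι ℤ (f x))
      rw [← map_mul (RingQuot.mkAlgHom ℤ (SymRel N)) (TensorAlgebra.ι ℤ (f x))
            (TensorAlgebra.ι ℤ (f y)),
        ← map_mul (RingQuot.mkAlgHom ℤ (SymRel N)) (TensorAlgebra.ι ℤ (f y))
            (TensorAlgebra.ι ℤ (f x))]
      exact RingQuot.mkAlgHom_rel ℤ ⟨f x, f y, rfl, rfl⟩⟩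

/-! If `f` is a ring homomorphism, both `f ∘ α_R` and `α_B ∘ Sym(f)` are ring homomorphisms
out of `Sym_ℤ(R)` sending a generator `x` to `f x`, so they coincide (naturality of `α`).
Conversely, evaluating the identity at `1` and at the product of the generators `x` and `y`
gives `f 1 = 1` and `f (x * y) = f x * f y`. -/

namespace SymZ

variable {M N : Type} [AddCommGroup M] [AddCommGroup N] {A C : Type} [CommRing A] [CommRing C]

noncomputable def ι (M : Type) [AddCommGroup M] : M →ₗ[ℤ] SymZ M :=
  (RingQuot.mkAlgHom ℤ (SymRel M)).toLinearMap.comp (TensorAlgebra.ι ℤ)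

@[ext]
theorem algHom_ext {φ ψ : SymZ M →ₐ[ℤ] A}
    (h : φ.toLinearMap.comp (ι M) = ψ.toLinearMap.comp (ι M)) : φ = ψ :=
  RingQuot.ringQuot_ext' ℤ _ _ (TensorAlgebra.hom_ext h)

@[simp]
theorem lift_ι (f : M →ₗ[ℤ] A) (x : M) : lift f (ι M x) = f x :=
  (RingQuot.liftAlgHom_mkAlgHom_apply ℤ _ _ _).trans (TensorAlgebra.lift_ι_apply f x)

@[simp]
theorem map_ι (f : M →ₗ[ℤ] N) (x : M) : map f (ι M x) = ι N (f x) :=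
  (RingQuot.liftAlgHom_mkAlgHom_apply ℤ _ _ _).trans (TensorAlgebra.lift_ι_apply _ x)

theorem comp_lift (φ : A →ₐ[ℤ] C) (f : M →ₗ[ℤ] A) :
    φ.comp (lift f) = lift (φ.toLinearMap.comp f) := by
  ext; simp

theorem lift_comp_map (g : N →ₗ[ℤ] A) (f : M →ₗ[ℤ] N) :
    (lift g).comp (map f) = lift (g.comp f) := by
  ext; simp

@[simp]
theorem alpha_ι {R : Type} [CommRing R] (x : R) : alpha R (ι R x) = x :=
  lift_ι _ x

theorem ringHom_comp_alpha {R : Type} [CommRing R] (g : R →+* A) :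
    g.toIntAlgHom.comp (alpha R) = (alpha A).comp (map g.toAddMonoidHom.toIntLinearMap) := by
  rw [alpha, alpha, comp_lift, lift_comp_map]
  rfl

end SymZ

/-- Let `R`, `B` be commutative rings and `f : R → B` an additive map.  Then
`f ∘ α_R = α_B ∘ Sym(f)` (as maps of sets `Sym_ℤ(R) → B`) if and only if `f` is a
unital ring homomorphism. -/
theorem comm_with_sym_structure_iff_ringHom (R B : Type) [CommRing R] [CommRing B]
    (f : R →+ B) :
    (∀ x : SymZ R, f (SymZ.alpha R x) = SymZ.alpha B (SymZ.map f.toIntLinearMap x)) ↔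
      (f 1 = 1 ∧ ∀ x y : R, f (x * y) = f x * f y) := by
  constructor
  · intro h
    refine ⟨by simpa using h 1, fun x y => ?_⟩
    simpa using h (SymZ.ι R x * SymZ.ι R y)
  · rintro ⟨h_one, h_mul⟩ x
    let g : R →+* B := { f with map_one' := h_one, map_mul' := h_mul }
    exact DFunLike.congr_fun (SymZ.ringHom_comp_alpha g) x
end
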